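/- arXiv:1607.02618 — 2 statements merged into one kernel-verified Lean document; each statement's English description precedes it below -/
import Mathlib

section
/- There exists an automorphism of the group K sending a ↦ a^(−1)·c^r, b ↦ a^r·b^(r²)·c^(−r²), c ↦ a^(−r²)·b^(r²)·c^(−r²), and h ↦ h·a^(−r)·b·c^(r²). -/
/-- The group `K = (ZMod n)³ ⋊ Z₃`, where the generator of `Z₃` acts on `(ZMod n)³`
by scalar multiplication by `r`.  An element is a pair `⟨v, t⟩` with
`v ∈ (ZMod n)³` and `t ∈ ZMod 3`; multiplication is
`⟨v, i⟩ * ⟨w, j⟩ = ⟨r^j • v + w, i + j⟩`, so that with `a = ⟨(1,0,0),0⟩`,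
`b = ⟨(0,1,0),0⟩`, `c = ⟨(0,0,1),0⟩`, `h = ⟨0,1⟩` the presentation
`aⁿ = bⁿ = cⁿ = h³ = [a,b] = [a,c] = [b,c] = 1`, `h⁻¹ah = a^r`, `h⁻¹bh = b^r`,
`h⁻¹ch = c^r` holds. -/
@[ext]
structure Kgrp (n : ℕ) (r : ZMod n) (hr : r ^ 2 + r + 1 = 0) : Type where
  v : ZMod n × ZMod n × ZMod n
  t : ZMod 3

namespace Kgrp

variable {n : ℕ} {r : ZMod n} {hr : r ^ 2 + r + 1 = 0}

instance : Mul (Kgrp n r hr) :=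
  ⟨fun x y => ⟨(r ^ y.t.val) • x.v + y.v, x.t + y.t⟩⟩

instance : One (Kgrp n r hr) := ⟨⟨0, 0⟩⟩

instance : Inv (Kgrp n r hr) :=
  ⟨fun x => ⟨-((r ^ (-x.t).val) • x.v), -x.t⟩⟩

@[simp] lemma mul_def (x y : Kgrp n r hr) :
    x * y = ⟨(r ^ y.t.val) • x.v + y.v, x.t + y.t⟩ := rfl

@[simp] lemma one_def : (1 : Kgrp n r hr) = ⟨0, 0⟩ := rfl

@[simp] lemma inv_def (x : Kgrp n r hr) :
    x⁻¹ = ⟨-((r ^ (-x.t).val) • x.v), -x.t⟩ := rfl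

lemma r_cube (hr : r ^ 2 + r + 1 = 0) : r ^ 3 = 1 := by
  linear_combination (r - 1) * hr

lemma r_pow_val_add (hr : r ^ 2 + r + 1 = 0) (i j : ZMod 3) :
    r ^ i.val * r ^ j.val = r ^ (i + j).val := by
  have h3 : r ^ 3 = 1 := r_cube hr
  have hval : (i + j).val = (i.val + j.val) % 3 := ZMod.val_add i j
  rw [hval, ← pow_add]
  conv_lhs => rw [← Nat.mod_add_div (i.val + j.val) 3]
  rw [pow_add, pow_mul, h3, one_pow, mul_one]

instance : Group (Kgrp n r hr) :=
  Group.ofLeftAxioms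
    (fun x y z => by
      have hs : r ^ z.t.val * r ^ y.t.val = r ^ (y.t + z.t).val := by
        rw [r_pow_val_add hr, add_comm]
      refine Kgrp.ext ?_ ?_
      · show r ^ z.t.val • ((r ^ y.t.val) • x.v + y.v) + z.v =
            r ^ (y.t + z.t).val • x.v + ((r ^ z.t.val) • y.v + z.v)
        rw [smul_add, smul_smul, hs, add_assoc]
      · show x.t + y.t + z.t = x.t + (y.t + z.t)
        exact add_assoc _ _ _)
    (fun x => by
      refine Kgrp.ext ?_ ?_
      · show r ^ x.t.val • (0 : ZMod n × ZMod n × ZMod n) + x.v = x.v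
        rw [smul_zero, zero_add]
      · show 0 + x.t = x.t
        exact zero_add _)
    (fun x => by
      have hs : r ^ x.t.val * r ^ (-x.t).val = 1 := by
        rw [r_pow_val_add hr]
        simp
      refine Kgrp.ext ?_ ?_
      · show r ^ x.t.val • (-(r ^ (-x.t).val • x.v)) + x.v = 0
        rw [smul_neg, smul_smul, hs, one_smul, neg_add_cancel]
      · show -x.t + x.t = 0
        exact neg_add_cancel _)

/-- The generator `a = ((1,0,0),0)` of `K`. -/
def gena (n : ℕ) (r : ZMod n) (hr : r ^ 2 + r + 1 = 0) : Kgrp n r hr := ⟨(1, 0, 0), 0⟩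

/-- The generator `b = ((0,1,0),0)` of `K`. -/
def genb (n : ℕ) (r : ZMod n) (hr : r ^ 2 + r + 1 = 0) : Kgrp n r hr := ⟨(0, 1, 0), 0⟩

/-- The generator `c = ((0,0,1),0)` of `K`. -/
def genc (n : ℕ) (r : ZMod n) (hr : r ^ 2 + r + 1 = 0) : Kgrp n r hr := ⟨(0, 0, 1), 0⟩

/-- The generator `h = ((0,0,0),1)` of `K`. -/
def genh (n : ℕ) (r : ZMod n) (hr : r ^ 2 + r + 1 = 0) : Kgrp n r hr := ⟨(0, 0, 0), 1⟩

end Kgrp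

/-!
An automorphism of `(ZMod n)³ ⋊ ZMod 3` preserving the `ZMod 3`-coordinate can be built as
`⟨v, t⟩ ↦ ⟨δ t + L v, t⟩` from a linear automorphism `L` of `(ZMod n)³` and a 1-cocycle `δ`.
Take for `L` the matrix whose columns are the prescribed images of `a`, `b`, `c` (it is invertible
because `r² + r + 1 = 0`), and `δ t = (1 + r + ⋯ + r ^ (t - 1)) • u` with `u = (-r, 1, r²)` the
vector part of the image of `h`; `δ` is a cocycle because `1 + r + r² = 0` makes these geometric
sums depend only on `t mod 3`.
-/

namespace Kgrp

variable {n : ℕ} {r : ZMod n}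

lemma geom_sum_mod_three (hr : r ^ 2 + r + 1 = 0) (m : ℕ) :
    ∑ k ∈ Finset.range (m % 3), r ^ k = ∑ k ∈ Finset.range m, r ^ k := by
  conv_rhs => rw [← Nat.mod_add_div m 3]
  induction m / 3 with
  | zero => rfl
  | succ q ih =>
    have hperiod : ∑ k ∈ Finset.range 3, r ^ (m % 3 + 3 * q + k) = 0 := by
      simp only [Finset.sum_range_succ, Finset.sum_range_zero]
      linear_combination r ^ (m % 3 + 3 * q) * hr
    rw [ih, Nat.mul_succ, ← add_assoc, Finset.sum_range_add _ _ 3, hperiod, add_zero]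

def geomCoeff (r : ZMod n) (t : ZMod 3) : ZMod n :=
  ∑ k ∈ Finset.range t.val, r ^ k

@[simp] lemma geomCoeff_zero : geomCoeff r 0 = 0 := rfl

@[simp] lemma geomCoeff_one : geomCoeff r 1 = 1 := by
  simp [geomCoeff, ZMod.val_one]

lemma geomCoeff_add (hr : r ^ 2 + r + 1 = 0) (i j : ZMod 3) :
    geomCoeff r (i + j) = r ^ j.val * geomCoeff r i + geomCoeff r j := by
  rw [geomCoeff, add_comm i, ZMod.val_add, geom_sum_mod_three hr, Finset.sum_range_add,
    add_comm]
  simp only [geomCoeff, Finset.mul_sum, pow_add]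

variable {hr : r ^ 2 + r + 1 = 0}

def affineAut (L : (ZMod n × ZMod n × ZMod n) ≃ₗ[ZMod n] ZMod n × ZMod n × ZMod n)
    (u : ZMod n × ZMod n × ZMod n) : Kgrp n r hr ≃* Kgrp n r hr where
  toFun x := ⟨geomCoeff r x.t • u + L x.v, x.t⟩
  invFun x := ⟨L.symm (x.v - geomCoeff r x.t • u), x.t⟩
  left_inv x := by ext1 <;> simp
  right_inv x := by ext1 <;> simp
  map_mul' x y := by
    ext1
    · simp only [mul_def, geomCoeff_add hr, map_add, map_smul]
      module
    · rfl

lemma affineAut_apply (L : (ZMod n × ZMod n × ZMod n) ≃ₗ[ZMod n] ZMod n × ZMod n × ZMod n)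
    (u : ZMod n × ZMod n × ZMod n) (x : Kgrp n r hr) :
    affineAut L u x = ⟨geomCoeff r x.t • u + L x.v, x.t⟩ := rfl

lemma mk_zero_pow (v : ZMod n × ZMod n × ZMod n) (k : ℕ) :
    (⟨v, 0⟩ : Kgrp n r hr) ^ k = ⟨k • v, 0⟩ := by
  induction k with
  | zero => simp
  | succ k ih => ext1 <;> simp [pow_succ, ih, add_smul]

lemma mk_zero_pow_val [NeZero n] (v : ZMod n × ZMod n × ZMod n) (s : ZMod n) :
    (⟨v, 0⟩ : Kgrp n r hr) ^ s.val = ⟨s • v, 0⟩ := by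
  rw [mk_zero_pow, ← Nat.cast_smul_eq_nsmul (ZMod n), ZMod.natCast_zmod_val]

lemma mul_mk_zero (x : Kgrp n r hr) (w : ZMod n × ZMod n × ZMod n) :
    x * ⟨w, 0⟩ = ⟨x.v + w, x.t⟩ := by
  ext1 <;> simp

def stmt5LinearEquiv (hr : r ^ 2 + r + 1 = 0) :
    (ZMod n × ZMod n × ZMod n) ≃ₗ[ZMod n] ZMod n × ZMod n × ZMod n where
  toFun v := (-v.1 + r * v.2.1 - r ^ 2 * v.2.2, r ^ 2 * v.2.1 + r ^ 2 * v.2.2,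
    r * v.1 - r ^ 2 * v.2.1 - r ^ 2 * v.2.2)
  invFun v := (r ^ 2 * v.2.1 + r ^ 2 * v.2.2, -v.1 + r * v.2.1 - r ^ 2 * v.2.2,
    v.1 + r ^ 2 * v.2.2)
  map_add' v w := by ext <;> simp <;> ring
  map_smul' s v := by ext <;> simp <;> ring
  left_inv := fun ⟨x, y, z⟩ => by
    ext
    · linear_combination (x * (r - 1)) * hr
    · linear_combination ((r + 1) * (r - 1) * y - (r - 1) * x + r ^ 2 * z) * hr
    · linear_combination ((r - 1) * x - r * (r - 1) * y - (r ^ 2 - r + 1) * z) * hr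
  right_inv := fun ⟨x, y, z⟩ => by
    ext
    · linear_combination (-x - r ^ 2 * z) * hr
    · linear_combination ((r - 1) * y) * hr
    · linear_combination ((r - 1) * z) * hr

end Kgrp

open Kgrp in
/-- There exists an automorphism of the group `K` sending
`a ↦ a^(−1)·c^r`, `b ↦ a^r·b^(r²)·c^(−r²)`, `c ↦ a^(−r²)·b^(r²)·c^(−r²)`,
`h ↦ h·a^(−r)·b·c^(r²)`, where `x ^ s` for `s : ZMod n` denotes `x ^ s.val`. -/
theorem stmt5 (n : ℕ) (hn : 7 ≤ n) (r : ZMod n) (hr : r ^ 2 + r + 1 = 0) :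
    ∃ φ : Kgrp n r hr ≃* Kgrp n r hr,
      φ (gena n r hr) = (gena n r hr) ^ ((-1 : ZMod n)).val * (genc n r hr) ^ r.val ∧
      φ (genb n r hr) =
        (gena n r hr) ^ r.val * (genb n r hr) ^ ((r ^ 2)).val * (genc n r hr) ^ (-(r ^ 2)).val ∧
      φ (genc n r hr) =
        (gena n r hr) ^ (-(r ^ 2)).val * (genb n r hr) ^ ((r ^ 2)).val *
          (genc n r hr) ^ (-(r ^ 2)).val ∧
      φ (genh n r hr) =
        genh n r hr * (gena n r hr) ^ (-r).val * genb n r hr * (genc n r hr) ^ ((r ^ 2)).val := by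
  have : NeZero n := ⟨by omega⟩
  refine ⟨affineAut (stmt5LinearEquiv hr) (-r, 1, r ^ 2), ?_, ?_, ?_, ?_⟩ <;>
    simp only [gena, genb, genc, genh, affineAut_apply, mk_zero_pow_val, mul_mk_zero] <;>
    ext <;> simp [stmt5LinearEquiv]
end

section
/- There is no automorphism φ of the group K satisfying both φ(h) = h⁻¹·a·b^(−r²)·c^(−r) and φ(h⁻¹·a) = h·a^(−r). (Consequently the edge-reversing automorphism β of K₃,₃ does not lift to the regular K-cover defined by the voltage assignment of the construction.) -/
namespace Kgrp

variable {n : ℕ} {r : ZMod n} {hr : r ^ 2 + r + 1 = 0}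

lemma pow_t_zero (v : ZMod n × ZMod n × ZMod n) (k : ℕ) :
    (⟨v, 0⟩ : Kgrp n r hr) ^ k = ⟨(k : ZMod n) • v, 0⟩ := by
  induction k with
  | zero => simp
  | succ k ih =>
      rw [pow_succ, ih, mul_def]
      refine Kgrp.ext ?_ (by simp)
      show r ^ (0 : ZMod 3).val • ((k : ZMod n) • v) + v = ((k + 1 : ℕ) : ZMod n) • v
      simp [add_smul, add_comm]

end Kgrp

open Kgrp in
/-- There is no automorphism `φ` of the group `K` satisfying both
`φ(h) = h⁻¹·a·b^(−r²)·c^(−r)` and `φ(h⁻¹·a) = h·a^(−r)`, where `x ^ s` for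
`s : ZMod n` denotes `x ^ s.val`.  (Consequently the edge-reversing automorphism
`β` of `K₃,₃` does not lift to the regular `K`-cover defined by the voltage
assignment of the construction.) -/
theorem stmt6 (n : ℕ) (hn : 7 ≤ n) (r : ZMod n) (hr : r ^ 2 + r + 1 = 0) :
    ¬ ∃ φ : Kgrp n r hr ≃* Kgrp n r hr,
        φ (genh n r hr) =
          (genh n r hr)⁻¹ * gena n r hr * (genb n r hr) ^ (-(r ^ 2)).val *
            (genc n r hr) ^ (-r).val ∧
        φ ((genh n r hr)⁻¹ * gena n r hr) = genh n r hr * (gena n r hr) ^ (-r).val := by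
  have hne : NeZero n := ⟨by omega⟩
  rintro ⟨φ, h1, h2⟩
  have hcastv : ∀ s : ZMod n, ((s.val : ℕ) : ZMod n) = s := fun s => by
    rw [ZMod.natCast_val, ZMod.cast_id]
  have hr3 : r ^ 3 = 1 := Kgrp.r_cube hr
  have hA : φ (genh n r hr) = ⟨(1, -(r ^ 2), -r), 2⟩ := by
    rw [h1]
    rw [show (genb n r hr) ^ (-(r ^ 2)).val = ⟨(0, -(r ^ 2), 0), 0⟩ by
      rw [genb, pow_t_zero, hcastv]; refine Kgrp.ext (by simp) rfl]
    rw [show (genc n r hr) ^ (-r).val = ⟨(0, 0, -r), 0⟩ by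
      rw [genc, pow_t_zero, hcastv]; refine Kgrp.ext (by simp) rfl]
    refine Kgrp.ext ?_ rfl
    show r ^ (0:ZMod 3).val • (r ^ (0:ZMod 3).val •
        (r ^ (0:ZMod 3).val • -(r ^ (-(1:ZMod 3)).val • ((0:ZMod n),(0:ZMod n),(0:ZMod n))) + (1,0,0))
        + (0, -(r^2), 0)) + (0,0,-r) = (1, -(r ^ 2), -r)
    simp [Prod.ext_iff]
  have hB : φ ((genh n r hr)⁻¹ * gena n r hr) = ⟨(-r, 0, 0), 1⟩ := by
    rw [h2]
    rw [show (gena n r hr) ^ (-r).val = ⟨(-r, 0, 0), 0⟩ by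
      rw [gena, pow_t_zero, hcastv]; refine Kgrp.ext (by simp) rfl]
    refine Kgrp.ext ?_ rfl
    show r ^ (0:ZMod 3).val • ((0:ZMod n),(0:ZMod n),(0:ZMod n)) + (-r, 0, 0) = (-r, 0, 0)
    simp
  have ha : genh n r hr * ((genh n r hr)⁻¹ * gena n r hr) = gena n r hr := by
    rw [← mul_assoc, mul_inv_cancel, one_mul]
  have hφa : φ (gena n r hr) = ⟨(0, -1, -(r ^ 2)), 0⟩ := by
    rw [← ha, map_mul, hA, hB, mul_def]
    refine Kgrp.ext ?_ rfl
    show r ^ (1:ZMod 3).val • ((1:ZMod n), -(r ^ 2), -r) + (-r, 0, 0) = (0, -1, -(r ^ 2))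
    have h1v : (1 : ZMod 3).val = 1 := rfl
    simp only [h1v, pow_one, Prod.smul_mk, smul_eq_mul, Prod.mk_add_mk, Prod.mk.injEq]
    refine ⟨by ring, by linear_combination -hr3, by ring⟩
  have hrel : (genh n r hr)⁻¹ * gena n r hr * genh n r hr = (gena n r hr) ^ r.val := by
    show _ = (⟨((1:ZMod n),0,0), 0⟩ : Kgrp n r hr) ^ r.val
    rw [pow_t_zero, hcastv]
    refine Kgrp.ext ?_ (show (-(1:ZMod 3) + 0 + 1 = 0) by decide)
    show r ^ (1:ZMod 3).val • (r ^ (0:ZMod 3).val •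
        -(r ^ (-(1:ZMod 3)).val • ((0:ZMod n),(0:ZMod n),(0:ZMod n))) + (1,0,0)) + (0,0,0)
        = r • ((1:ZMod n),0,0)
    have h1v : (1 : ZMod 3).val = 1 := rfl
    simp [h1v, Prod.ext_iff]
  have key : (⟨(-r, 0, 0), 1⟩ : Kgrp n r hr) * ⟨(1, -(r ^ 2), -r), 2⟩
      = (⟨((0:ZMod n), -1, -(r ^ 2)), 0⟩ : Kgrp n r hr) ^ r.val := by
    rw [← hA, ← hB, ← hφa, ← map_mul, ← map_pow, mul_assoc, ← hrel, ← mul_assoc]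
  rw [pow_t_zero, hcastv, mul_def] at key
  have h3 : r ^ (2:ZMod 3).val * 0 + (-r) = r * (-(r ^ 2)) := by
    have := congrArg (fun x : Kgrp n r hr => x.v.2.2) key
    simpa [smul_eq_mul] using this
  have hr1 : r = 1 := by
    linear_combination -h3 + hr3
  have h30 : ((3 : ℕ) : ZMod n) = 0 := by
    rw [hr1] at hr
    push_cast
    linear_combination hr
  have hdvd : n ∣ 3 := (ZMod.natCast_eq_zero_iff 3 n).mp h30
  have := Nat.le_of_dvd (by norm_num) hdvd
  omega
end
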